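/- arXiv:1404.2897 — 2 statements merged into one kernel-verified Lean document; each statement's English description precedes it below -/
import Mathlib

section
/- Let A = K(H) be the compact operators on a Hilbert space H. The left centralizers of the ideal F(H) of finite-rank operators correspond bijectively to (possibly unbounded) linear transformations t : H → H via T(v ⊗ w̄) = (tv) ⊗ w̄, where (v ⊗ w̄)u = ⟨u, w⟩ v. -/
/-!
Rank-one operators span `F(H)`: a finite-rank `x` equals `P ∘ x`, where `P = ∑ bᵢ ⊗ b̄ᵢ` is the
orthogonal projection onto its range, and `(bᵢ ⊗ b̄ᵢ) ∘ x = bᵢ ⊗ (x* bᵢ)`. So a linear map on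
`F(H)` is determined by its values on rank-one operators. For a left centralizer `T` and a unit
vector `e`, the factorisation `v ⊗ w̄ = (v ⊗ ē)(e ⊗ w̄)` gives `T(v ⊗ w̄) = (t v) ⊗ w̄` with
`t v = T(v ⊗ ē) e`. Conversely, for any linear `t`, `x ↦ t ∘ x` is a left centralizer: `t ∘ x`
is bounded because `x` has finite-dimensional range.
-/

open scoped ComplexOrder

noncomputable section

variable {H : Type*} [NormedAddCommGroup H] [InnerProductSpace ℂ H] [CompleteSpace H]

/-- The subspace `F(H)` of bounded finite-rank operators on `H`
(the Pedersen ideal of the C*-algebra `K(H)` of compact operators). -/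
def FR (H : Type*) [NormedAddCommGroup H] [InnerProductSpace ℂ H] :
    Submodule ℂ (H →L[ℂ] H) where
  carrier := {x | FiniteDimensional ℂ (LinearMap.range (x : H →ₗ[ℂ] H))}
  add_mem' := by
    intro a b ha hb
    simp only [Set.mem_setOf_eq] at *
    haveI := ha; haveI := hb
    haveI : FiniteDimensional ℂ
        ↥(LinearMap.range (a : H →ₗ[ℂ] H) ⊔ LinearMap.range (b : H →ₗ[ℂ] H)) :=
      Submodule.finiteDimensional_sup _ _
    exact Submodule.finiteDimensional_of_le
      (show LinearMap.range ((a + b : H →L[ℂ] H) : H →ₗ[ℂ] H) ≤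
          LinearMap.range (a : H →ₗ[ℂ] H) ⊔ LinearMap.range (b : H →ₗ[ℂ] H) by
        rintro x ⟨u, rfl⟩
        exact Submodule.mem_sup.2 ⟨a u, ⟨u, rfl⟩, b u, ⟨u, rfl⟩, by simp⟩)
  zero_mem' := by
    simp only [Set.mem_setOf_eq]
    exact Submodule.finiteDimensional_of_le (show _ ≤ (⊥ : Submodule ℂ H) by
      rintro x ⟨u, rfl⟩; simp)
  smul_mem' := by
    intro c a ha
    simp only [Set.mem_setOf_eq] at *
    haveI := ha
    exact Submodule.finiteDimensional_of_le
      (show LinearMap.range ((c • a : H →L[ℂ] H) : H →ₗ[ℂ] H) ≤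
          LinearMap.range (a : H →ₗ[ℂ] H) by
        rintro x ⟨u, rfl⟩
        exact ⟨c • u, by simp [map_smul]⟩)

/-- The rank-one operator `v ⊗ w̄ : u ↦ ⟨u, w⟩ v`. -/
noncomputable def rankOne (v w : H) : H →L[ℂ] H := (innerSL ℂ w).smulRight v

/-- `T` is a left centralizer of `F(H)`: it maps `F(H)` into `F(H)` and
`T(xy) = (Tx)y` for all `x, y ∈ F(H)`. -/
def IsLeftCentralizer (T : FR H →ₗ[ℂ] (H →L[ℂ] H)) : Prop :=
  (∀ x : FR H, T x ∈ FR H) ∧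
  ∀ (x y : FR H) (h : (x : H →L[ℂ] H) * (y : H →L[ℂ] H) ∈ FR H),
    T ⟨(x : H →L[ℂ] H) * (y : H →L[ℂ] H), h⟩ = T x * (y : H →L[ℂ] H)

section

variable {𝕜 E F G : Type*} [NontriviallyNormedField 𝕜] [CompleteSpace 𝕜]
  [NormedAddCommGroup E] [NormedSpace 𝕜 E] [NormedAddCommGroup F] [NormedSpace 𝕜 F]
  [NormedAddCommGroup G] [NormedSpace 𝕜 G]

theorem LinearMap.continuous_comp_of_finiteDimensional_range (t : F →ₗ[𝕜] G) (x : E →L[𝕜] F)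
    [FiniteDimensional 𝕜 (LinearMap.range (x : E →ₗ[𝕜] F))] :
    Continuous (t ∘ₗ (x : E →ₗ[𝕜] F)) :=
  have hx : Continuous fun u ↦
      (⟨x u, LinearMap.mem_range_self _ u⟩ : LinearMap.range (x : E →ₗ[𝕜] F)) :=
    x.continuous.subtype_mk _
  (LinearMap.continuous_of_finiteDimensional
    (t ∘ₗ (LinearMap.range (x : E →ₗ[𝕜] F)).subtype)).comp hx

end

section

variable {E : Type*} [NormedAddCommGroup E] [InnerProductSpace ℂ E]

theorem rankOne_eq_innerProductSpace_rankOne (v w : E) :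
    rankOne v w = InnerProductSpace.rankOne ℂ v w :=
  rfl

theorem rankOne_mem_FR (v w : E) : rankOne v w ∈ FR E :=
  Submodule.finiteDimensional_of_le (S₂ := ℂ ∙ v) <| by
    rintro _ ⟨u, rfl⟩
    exact Submodule.mem_span_singleton.2 ⟨_, rfl⟩

theorem rankOne_left_injective {a b : E} (h : ∀ w, rankOne a w = rankOne b w) : a = b := by
  have h0 : InnerProductSpace.rankOne ℂ (a - b) (a - b) = 0 := by
    rw [(InnerProductSpace.rankOne ℂ).map_sub a b, sub_apply]
    exact sub_eq_zero.2 (h (a - b))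
  rwa [InnerProductSpace.rankOne_eq_zero, or_self, sub_eq_zero] at h0

theorem FR_eq_span_rankOne [CompleteSpace E] :
    FR E = Submodule.span ℂ (Set.range fun p : E × E ↦ rankOne p.1 p.2) := by
  refine le_antisymm (fun x hx ↦ ?_) (Submodule.span_le.2 ?_)
  · have : FiniteDimensional ℂ (LinearMap.range (x : E →ₗ[ℂ] E)) := hx
    set U := LinearMap.range (x : E →ₗ[ℂ] E)
    have hx : x = U.starProjection ∘L x := by
      ext u
      exact (Submodule.starProjection_eq_self_iff.2 (LinearMap.mem_range_self _ u)).symm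
    rw [hx, (stdOrthonormalBasis ℂ U).starProjection_eq_sum_rankOne,
      ContinuousLinearMap.finsetSum_comp]
    refine Submodule.sum_mem _ fun i _ ↦ ?_
    rw [InnerProductSpace.rankOne_comp]
    exact Submodule.subset_span (Set.mem_range_self (_, _))
  · rintro _ ⟨p, rfl⟩
    exact rankOne_mem_FR p.1 p.2

theorem FR.span_rankOne_eq_top [CompleteSpace E] :
    Submodule.span ℂ (Set.range fun p : E × E ↦ (⟨rankOne p.1 p.2, rankOne_mem_FR _ _⟩ : FR E)) =
      ⊤ := by
  apply Submodule.map_injective_of_injective (FR E).injective_subtype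
  rw [Submodule.map_top, Submodule.range_subtype, ← Submodule.span_image, ← Set.range_comp]
  exact FR_eq_span_rankOne.symm

theorem FR.linearMap_ext_rankOne [CompleteSpace E] {M : Type*} [AddCommGroup M] [Module ℂ M]
    {T S : FR E →ₗ[ℂ] M}
    (h : ∀ v w, T ⟨rankOne v w, rankOne_mem_FR v w⟩ = S ⟨rankOne v w, rankOne_mem_FR v w⟩) :
    T = S :=
  LinearMap.ext_on FR.span_rankOne_eq_top (by rintro _ ⟨⟨v, w⟩, rfl⟩; exact h v w)

def leftCompFR (t : E →ₗ[ℂ] E) : FR E →ₗ[ℂ] (E →L[ℂ] E) where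
  toFun x := ⟨t ∘ₗ (x : E →L[ℂ] E), by
    have : FiniteDimensional ℂ (LinearMap.range ((x : E →L[ℂ] E) : E →ₗ[ℂ] E)) := x.2
    exact LinearMap.continuous_comp_of_finiteDimensional_range t (x : E →L[ℂ] E)⟩
  map_add' _ _ := by ext; simp
  map_smul' _ _ := by ext; simp

theorem leftCompFR_apply (t : E →ₗ[ℂ] E) (x : FR E) (u : E) :
    leftCompFR t x u = t ((x : E →L[ℂ] E) u) :=
  rfl

theorem leftCompFR_rankOne (t : E →ₗ[ℂ] E) (v w : E) (h : rankOne v w ∈ FR E) :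
    leftCompFR t ⟨rankOne v w, h⟩ = rankOne (t v) w := by
  ext u
  simp [leftCompFR_apply, rankOne_eq_innerProductSpace_rankOne]

theorem leftCompFR_mem_FR (t : E →ₗ[ℂ] E) (x : FR E) : leftCompFR t x ∈ FR E := by
  have : FiniteDimensional ℂ (LinearMap.range ((x : E →L[ℂ] E) : E →ₗ[ℂ] E)) := x.2
  refine Submodule.finiteDimensional_of_le
    (S₂ := (LinearMap.range ((x : E →L[ℂ] E) : E →ₗ[ℂ] E)).map t) ?_
  rintro _ ⟨u, rfl⟩
  exact ⟨_, ⟨u, rfl⟩, rfl⟩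

theorem isLeftCentralizer_leftCompFR (t : E →ₗ[ℂ] E) : IsLeftCentralizer (leftCompFR t) :=
  ⟨leftCompFR_mem_FR t, fun _ _ _ ↦ rfl⟩

def FR.rankOneLeft (w : E) : E →ₗ[ℂ] FR E where
  toFun v := ⟨rankOne v w, rankOne_mem_FR v w⟩
  map_add' _ _ := by ext; simp [rankOne_eq_innerProductSpace_rankOne]
  map_smul' _ _ := by ext; simp [rankOne_eq_innerProductSpace_rankOne]

theorem IsLeftCentralizer.apply_rankOne {T : FR E →ₗ[ℂ] (E →L[ℂ] E)} (hT : IsLeftCentralizer T)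
    {e : E} (he : ‖e‖ = 1) (v w : E) (h : rankOne v w ∈ FR E) :
    T ⟨rankOne v w, h⟩ = rankOne (T ⟨rankOne v e, rankOne_mem_FR v e⟩ e) w := by
  have hfac : rankOne v w = rankOne v e * rankOne e w := by
    simp [rankOne_eq_innerProductSpace_rankOne, ContinuousLinearMap.mul_def,
      InnerProductSpace.rankOne_comp_rankOne, inner_self_eq_norm_sq_to_K, he]
  calc T ⟨rankOne v w, h⟩ = T ⟨rankOne v e * rankOne e w, hfac ▸ h⟩ := by simp_rw [hfac]
    _ = T ⟨rankOne v e, rankOne_mem_FR v e⟩ * rankOne e w :=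
      hT.2 ⟨_, rankOne_mem_FR v e⟩ ⟨_, rankOne_mem_FR e w⟩ _
    _ = rankOne (T ⟨rankOne v e, rankOne_mem_FR v e⟩ e) w :=
      InnerProductSpace.comp_rankOne _ _ _

theorem IsLeftCentralizer.exists_linearMap {T : FR E →ₗ[ℂ] (E →L[ℂ] E)}
    (hT : IsLeftCentralizer T) :
    ∃ t : E →ₗ[ℂ] E, ∀ (v w : E) (h : rankOne v w ∈ FR E),
      T ⟨rankOne v w, h⟩ = rankOne (t v) w := by
  rcases subsingleton_or_nontrivial E with hE | hE
  · exact ⟨0, fun _ _ _ ↦ Subsingleton.elim _ _⟩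
  · obtain ⟨e, he⟩ := exists_norm_eq E zero_le_one
    exact ⟨(ContinuousLinearMap.apply ℂ E e).toLinearMap ∘ₗ T ∘ₗ FR.rankOneLeft e,
      hT.apply_rankOne he⟩

end

/-- the left centralizers of `F(H)` correspond bijectively to (possibly
unbounded) linear transformations `t : H → H`, via `T(v ⊗ w̄) = (tv) ⊗ w̄`. -/
theorem stmt_9 :
    (∀ T : FR H →ₗ[ℂ] (H →L[ℂ] H), IsLeftCentralizer T →
      ∃! t : H →ₗ[ℂ] H, ∀ (v w : H) (h : rankOne v w ∈ FR H),
        T ⟨rankOne v w, h⟩ = rankOne (t v) w) ∧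
    (∀ t : H →ₗ[ℂ] H, ∃! T : FR H →ₗ[ℂ] (H →L[ℂ] H), IsLeftCentralizer T ∧
      ∀ (v w : H) (h : rankOne v w ∈ FR H), T ⟨rankOne v w, h⟩ = rankOne (t v) w) := by
  refine ⟨fun T hT ↦ ?_, fun t ↦ ?_⟩
  · obtain ⟨t, ht⟩ := hT.exists_linearMap
    refine ⟨t, ht, fun t' ht' ↦ LinearMap.ext fun v ↦ rankOne_left_injective fun w ↦ ?_⟩
    rw [← ht' v w (rankOne_mem_FR v w), ht]
  · refine ⟨leftCompFR t, ⟨isLeftCentralizer_leftCompFR t, leftCompFR_rankOne t⟩,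
      fun T hT ↦ FR.linearMap_ext_rankOne fun v w ↦ ?_⟩
    rw [hT.2, leftCompFR_rankOne]
end
end

section
/- Let H be a Hilbert space, T : F(H) → F(H) a left centralizer of the finite-rank operators, and suppose T is bounded. Then there exists a bounded operator t ∈ B(H) with ‖t‖ ≤ ‖T‖ such that Tx = t∘x for all x ∈ F(H). -/
open scoped ComplexOrder

noncomputable section

variable {H : Type*} [NormedAddCommGroup H] [InnerProductSpace ℂ H] [CompleteSpace H]

/-!
If `y, x ∈ F(H)` and `y` fixes the range of `x`, the centralizer identity gives
`T x = T y * x`. Comparing with the projection onto `ℂ ∙ v`, the vector `(T y) v` is therefore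
the same for every `y ∈ F(H)` fixing `v`; call it `t v`. Evaluating against the projection
onto `span {v, w}` shows that `t` is linear, and `‖t v‖ ≤ C ‖v‖` because projections have norm
at most one. Finally `T x = t * x`, taking for `y` the projection onto the range of `x`.
-/

section

variable {E : Type*} [NormedAddCommGroup E] [InnerProductSpace ℂ E]

theorem mem_FR_iff {x : E →L[ℂ] E} :
    x ∈ FR E ↔ FiniteDimensional ℂ (LinearMap.range (x : E →ₗ[ℂ] E)) := Iff.rfl

theorem mul_mem_FR {x : E →L[ℂ] E} (hx : x ∈ FR E) (y : E →L[ℂ] E) : x * y ∈ FR E := by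
  rw [mem_FR_iff] at hx ⊢
  exact Submodule.finiteDimensional_of_le (LinearMap.range_comp_le_range _ _)

theorem starProjection_mem_FR (K : Submodule ℂ E) [FiniteDimensional ℂ K] :
    K.starProjection ∈ FR E := by
  rw [mem_FR_iff]
  exact Submodule.finiteDimensional_of_le
    (by rintro _ ⟨u, rfl⟩; exact K.starProjection_apply_mem u)

def projFR (K : Submodule ℂ E) [FiniteDimensional ℂ K] : FR E :=
  ⟨K.starProjection, starProjection_mem_FR K⟩

theorem mul_starProjection_of_forall_mem {K : Submodule ℂ E} [K.HasOrthogonalProjection]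
    {y : E →L[ℂ] E} (hy : ∀ v ∈ K, y v = v) : y * K.starProjection = K.starProjection :=
  ContinuousLinearMap.ext fun u => hy _ (K.starProjection_apply_mem u)

theorem starProjection_range_mul (x : E →L[ℂ] E)
    [(LinearMap.range (x : E →ₗ[ℂ] E)).HasOrthogonalProjection] :
    (LinearMap.range (x : E →ₗ[ℂ] E)).starProjection * x = x :=
  ContinuousLinearMap.ext fun u => Submodule.starProjection_eq_self_iff.mpr ⟨u, rfl⟩

namespace IsLeftCentralizer

variable {T : FR E →ₗ[ℂ] (E →L[ℂ] E)}

theorem map_eq_mul_of_mul_eq (hT : IsLeftCentralizer T) {x y : FR E}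
    (h : (y : E →L[ℂ] E) * x = x) : T x = T y * x := by
  rw [← hT.2 y x (mul_mem_FR y.2 x)]
  exact congrArg T (Subtype.ext h.symm)

def multiplier (T : FR E →ₗ[ℂ] (E →L[ℂ] E)) (v : E) : E :=
  T (projFR (ℂ ∙ v)) v

theorem map_apply_eq_multiplier (hT : IsLeftCentralizer T) {y : FR E} {v : E}
    (hy : (y : E →L[ℂ] E) v = v) : T y v = multiplier T v := by
  have hfix : ∀ u ∈ ℂ ∙ v, (y : E →L[ℂ] E) u = u := by
    intro u hu
    obtain ⟨c, rfl⟩ := Submodule.mem_span_singleton.mp hu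
    rw [map_smul, hy]
  have hP := hT.map_eq_mul_of_mul_eq (x := projFR (ℂ ∙ v))
    (mul_starProjection_of_forall_mem hfix)
  rw [multiplier, hP, mul_apply_eq_comp, projFR, Subtype.coe_mk,
    Submodule.starProjection_eq_self_iff.mpr (Submodule.mem_span_singleton_self v)]

theorem multiplier_add (hT : IsLeftCentralizer T) (v w : E) :
    multiplier T (v + w) = multiplier T v + multiplier T w := by
  let K := Submodule.span ℂ {v, w}
  have : FiniteDimensional ℂ K := FiniteDimensional.span_of_finite ℂ (Set.toFinite _)
  have hv : v ∈ K := Submodule.subset_span (by simp)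
  have hw : w ∈ K := Submodule.subset_span (by simp)
  have fixes {u : E} (hu : u ∈ K) : (projFR K : E →L[ℂ] E) u = u :=
    Submodule.starProjection_eq_self_iff.mpr hu
  rw [← hT.map_apply_eq_multiplier (fixes hv), ← hT.map_apply_eq_multiplier (fixes hw),
    ← hT.map_apply_eq_multiplier (fixes (K.add_mem hv hw)), map_add]

theorem multiplier_smul (hT : IsLeftCentralizer T) (c : ℂ) (v : E) :
    multiplier T (c • v) = c • multiplier T v := by
  have hcv : (projFR (ℂ ∙ v) : E →L[ℂ] E) (c • v) = c • v :=
    Submodule.starProjection_eq_self_iff.mpr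
      (Submodule.smul_mem _ c (Submodule.mem_span_singleton_self v))
  rw [← hT.map_apply_eq_multiplier hcv, map_smul, multiplier]

def multiplierₗ (hT : IsLeftCentralizer T) : E →ₗ[ℂ] E where
  toFun := multiplier T
  map_add' := hT.multiplier_add
  map_smul' := hT.multiplier_smul

theorem norm_multiplier_le {C : ℝ} (hC0 : 0 ≤ C) (hC : ∀ x : FR E, ‖T x‖ ≤ C * ‖x‖) (v : E) :
    ‖multiplier T v‖ ≤ C * ‖v‖ := by
  have hP : ‖projFR (ℂ ∙ v)‖ ≤ 1 := Submodule.starProjection_norm_le _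
  calc ‖multiplier T v‖ ≤ ‖T (projFR (ℂ ∙ v))‖ * ‖v‖ := ContinuousLinearMap.le_opNorm _ v
    _ ≤ C * ‖projFR (ℂ ∙ v)‖ * ‖v‖ := by gcongr; exact hC _
    _ ≤ C * ‖v‖ := by
      gcongr
      exact mul_le_of_le_one_right hC0 hP

theorem map_apply_eq_multiplierₗ (hT : IsLeftCentralizer T) (x : FR E) (u : E) :
    T x u = hT.multiplierₗ ((x : E →L[ℂ] E) u) := by
  have : FiniteDimensional ℂ (LinearMap.range ((x : E →L[ℂ] E) : E →ₗ[ℂ] E)) := x.2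
  let P := projFR (LinearMap.range ((x : E →L[ℂ] E) : E →ₗ[ℂ] E))
  have hPx : (P : E →L[ℂ] E) * x = x := starProjection_range_mul _
  rw [hT.map_eq_mul_of_mul_eq hPx, mul_apply_eq_comp]
  exact hT.map_apply_eq_multiplier (congrArg (· u) hPx)

end IsLeftCentralizer

end

/-- a bounded left centralizer `T` of `F(H)` is given by left multiplication
by a bounded operator `t ∈ B(H)` with `‖t‖ ≤ ‖T‖`. -/
theorem stmt_18 (T : FR H →ₗ[ℂ] (H →L[ℂ] H)) (hT : IsLeftCentralizer T)
    (C : ℝ) (hC0 : 0 ≤ C) (hC : ∀ x : FR H, ‖T x‖ ≤ C * ‖x‖) :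
    ∃ t : H →L[ℂ] H, ‖t‖ ≤ C ∧ ∀ x : FR H, T x = t * (x : H →L[ℂ] H) :=
  ⟨hT.multiplierₗ.mkContinuous C (IsLeftCentralizer.norm_multiplier_le hC0 hC),
    LinearMap.mkContinuous_norm_le _ hC0 _,
    fun x => ContinuousLinearMap.ext (hT.map_apply_eq_multiplierₗ x)⟩
end
end
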